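/- arXiv:1101.5935 — 4 statements merged into one kernel-verified Lean document; each statement's English description precedes it below -/
import Mathlib

section
/- Suppose c and c̄ are null Cartan curves in Minkowski 4-space, c̄(φ(s)) = c(s) + α(s)W₁(s) where W̄₁(φ(s)) = ±W₁(s) for all s and φ is a reparametrization. Then α' = 0, i.e., α is constant. -/
noncomputable section

/-- Minkowski inner product on ℝ⁴ with signature (-,+,+,+). -/
def mink (x y : Fin 4 → ℝ) : ℝ := -(x 0 * y 0) + x 1 * y 1 + x 2 * y 2 + x 3 * y 3

/-!
Differentiating `c̄ ∘ φ = c + α W₁` with the Cartan equations `ċ = L`, `Ẇ₁ = -k₁ L - N` gives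
`φ̇ · L̄ ∘ φ = L - α (k₁ L + N) + α̇ W₁`. Pairing with `W₁` kills `L` and `N` and leaves `α̇`, while
the left side pairs to zero because `W₁ = ± W̄₁ ∘ φ` is orthogonal to the mate's tangent `L̄ ∘ φ`.
-/

lemma mink_smul_left (r : ℝ) (x y : Fin 4 → ℝ) : mink (r • x) y = r * mink x y := by
  simp only [mink, Pi.smul_apply, smul_eq_mul]; ring

lemma mink_add_left (x y z : Fin 4 → ℝ) : mink (x + y) z = mink x z + mink y z := by
  simp only [mink, Pi.add_apply]; ring

lemma mink_sub_left (x y z : Fin 4 → ℝ) : mink (x - y) z = mink x z - mink y z := by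
  simp only [mink, Pi.sub_apply]; ring

lemma mink_neg_right (x y : Fin 4 → ℝ) : mink x (-y) = -mink x y := by
  simp only [mink, Pi.neg_apply]; ring

lemma ne_zero_of_mink_eq_one {x y : Fin 4 → ℝ} (h : mink x y = 1) : x ≠ 0 := by
  rintro rfl
  simp [mink] at h

lemma mink_eq_zero_of_eq_or_eq_neg {v u w : Fin 4 → ℝ} (hw : w = u ∨ w = -u)
    (h : mink v w = 0) : mink v u = 0 := by
  rcases hw with rfl | rfl
  · exact h
  · simpa only [mink_neg_right, neg_eq_zero] using h

section OffsetCurve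

variable {c L N W₁ : ℝ → Fin 4 → ℝ} {k₁ α : ℝ → ℝ} {s : ℝ}

lemma deriv_add_smul_of_frame (hc : DifferentiableAt ℝ c s) (hα : DifferentiableAt ℝ α s)
    (hW₁ : DifferentiableAt ℝ W₁ s) (hcL : deriv c s = L s)
    (hW₁fr : deriv W₁ s = -(k₁ s) • L s - N s) :
    deriv (fun t => c t + α t • W₁ t) s
      = L s + α s • (-(k₁ s) • L s - N s) + deriv α s • W₁ s := by
  have hαW₁ : DifferentiableAt ℝ (fun t => α t • W₁ t) s := hα.smul hW₁
  rw [deriv_fun_add hc hαW₁, deriv_fun_smul hα hW₁, hcL, hW₁fr, add_assoc]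

lemma mink_deriv_add_smul_of_frame (hc : DifferentiableAt ℝ c s) (hα : DifferentiableAt ℝ α s)
    (hW₁ : DifferentiableAt ℝ W₁ s) (hcL : deriv c s = L s)
    (hW₁fr : deriv W₁ s = -(k₁ s) • L s - N s)
    (hLW₁ : mink (L s) (W₁ s) = 0) (hW₁W₁ : mink (W₁ s) (W₁ s) = 1)
    (hNW₁ : mink (N s) (W₁ s) = 0) :
    mink (deriv (fun t => c t + α t • W₁ t) s) (W₁ s) = deriv α s := by
  rw [deriv_add_smul_of_frame hc hα hW₁ hcL hW₁fr]
  simp only [mink_add_left, mink_sub_left, mink_smul_left, hLW₁, hW₁W₁, hNW₁]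
  ring

end OffsetCurve

theorem stmt2_general (c c' L N W₁ L' W₁' : ℝ → (Fin 4 → ℝ)) (k₁ : ℝ → ℝ)
    (α φ : ℝ → ℝ)
    (hα : Differentiable ℝ α)
    -- frame of c:
    (hcL : ∀ s, deriv c s = L s)
    (hW₁fr : ∀ s, deriv W₁ s = -(k₁ s) • L s - N s)
    (hLN : ∀ s, mink (L s) (N s) = 1)
    (hLW₁ : ∀ s, mink (L s) (W₁ s) = 0) (hW₁W₁ : ∀ s, mink (W₁ s) (W₁ s) = 1)
    (hNW₁ : ∀ s, mink (N s) (W₁ s) = 0)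
    (hW₁smooth : Differentiable ℝ W₁)
    -- frame of the mate c̄ (written c'): tangent and orthogonality:
    (hmate : ∀ s, deriv (fun t => c' (φ t)) s = deriv φ s • L' (φ s))
    (hL'W₁' : ∀ x, mink (L' x) (W₁' x) = 0)
    -- Bertrand condition: the mate and coinciding principal normals:
    (hpair : ∀ s, c' (φ s) = c s + α s • W₁ s)
    (hnormals : ∀ s, W₁' (φ s) = W₁ s ∨ W₁' (φ s) = -W₁ s) :
    ∀ s, deriv α s = 0 := by
  intro s
  -- `deriv` is junk (zero) off the differentiability locus, so `deriv c s = L s ≠ 0` pins it down.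
  have hc : DifferentiableAt ℝ c s :=
    differentiableAt_of_deriv_ne_zero (hcL s ▸ ne_zero_of_mink_eq_one (hLN s))
  have hmate' : deriv (fun t => c t + α t • W₁ t) s = deriv φ s • L' (φ s) := by
    simpa only [hpair] using hmate s
  calc deriv α s = mink (deriv (fun t => c t + α t • W₁ t) s) (W₁ s) :=
        (mink_deriv_add_smul_of_frame hc (hα s) (hW₁smooth s) (hcL s) (hW₁fr s) (hLW₁ s)
          (hW₁W₁ s) (hNW₁ s)).symm
    _ = 0 := by
      rw [hmate', mink_smul_left,
        mink_eq_zero_of_eq_or_eq_neg (hnormals s) (hL'W₁' (φ s)), mul_zero]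

/-- If `c̄(φ(s)) = c(s) + α(s) W₁(s)` is a Bertrand mate of `c`
(principal normals coincide: `W̄₁(φ(s)) = ± W₁(s)`), then `α' = 0`, i.e. `α`
is a constant function. -/
theorem stmt2 (c c' L N W₁ W₂ L' W₁' : ℝ → (Fin 4 → ℝ)) (k₁ : ℝ → ℝ)
    (α φ : ℝ → ℝ)
    (hα : Differentiable ℝ α) (hφ : Differentiable ℝ φ)
    -- frame of c:
    (hcL : ∀ s, deriv c s = L s)
    (hLfr : ∀ s, deriv L s = W₁ s)
    (hW₁fr : ∀ s, deriv W₁ s = -(k₁ s) • L s - N s)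
    (hLL : ∀ s, mink (L s) (L s) = 0) (hLN : ∀ s, mink (L s) (N s) = 1)
    (hLW₁ : ∀ s, mink (L s) (W₁ s) = 0) (hW₁W₁ : ∀ s, mink (W₁ s) (W₁ s) = 1)
    (hNW₁ : ∀ s, mink (N s) (W₁ s) = 0)
    (hW₁smooth : Differentiable ℝ W₁)
    -- frame of the mate c̄ (written c'): tangent and orthogonality:
    (hmate : ∀ s, deriv (fun t => c' (φ t)) s = deriv φ s • L' (φ s))
    (hL'W₁' : ∀ x, mink (L' x) (W₁' x) = 0)
    -- Bertrand condition: the mate and coinciding principal normals: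
    (hpair : ∀ s, c' (φ s) = c s + α s • W₁ s)
    (hnormals : ∀ s, W₁' (φ s) = W₁ s ∨ W₁' (φ s) = -W₁ s) :
    ∀ s, deriv α s = 0 :=
  stmt2_general c c' L N W₁ L' W₁' k₁ α φ hα hcL hW₁fr hLN hLW₁ hW₁W₁ hNW₁ hW₁smooth hmate hL'W₁'
    hpair hnormals
end
end

section
/- For the curve c(s) = (a²+b²)^{-1/2}·(a⁻¹sinh(as), a⁻¹cosh(as), b⁻¹sin(bs), b⁻¹cos(bs)) in Minkowski 4-space (a,b ≠ 0, a ≠ ±b), the frame L(s) = (a²+b²)^{-1/2}(cosh as, sinh as, cos bs, -sin bs), W₁(s) = (a²+b²)^{-1/2}(a sinh as, a cosh as, -b sin bs, -b cos bs), N(s) = -(√(a²+b²)/2)(cosh as, sinh as, -cos bs, sin bs), W₂(s) = (a²+b²)^{-1/2}(b sinh as, b cosh as, a sin bs, a cos bs) satisfies the Cartan–Frenet equations L' = W₁, N' = k₁W₁ + k₂W₂, W₁' = -k₁L - N, W₂' = -k₂L with k₁ = (b²-a²)/2 and k₂ = -ab. -/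
/-!
Every frame field is a constant multiple of a vector whose entries are `cosh`, `sinh` of `a s`
and `cos`, `sin` of `b s`, so it is differentiated entrywise. Once the coefficient
`-√(a²+b²)/2` of `N` is rewritten as `(√(a²+b²))⁻¹ * (-(a²+b²)/2)`, each Frenet equation
becomes a polynomial identity in the entries and `(√(a²+b²))⁻¹`.
-/

noncomputable section

open Real Matrix

section VectorDerivatives

variable {𝕜 F : Type*} [NontriviallyNormedField 𝕜] [NormedAddCommGroup F] [NormedSpace 𝕜 F]

theorem hasDerivAt_vecEmpty (x : 𝕜) : HasDerivAt (fun _ => (![] : Fin 0 → F)) ![] x :=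
  hasDerivAt_pi.2 fun i => i.elim0

theorem HasDerivAt.vecCons {n : ℕ} {f : 𝕜 → F} {g : 𝕜 → Fin n → F} {f' : F} {g' : Fin n → F}
    {x : 𝕜} (hf : HasDerivAt f f' x) (hg : HasDerivAt g g' x) :
    HasDerivAt (fun t => vecCons (f t) (g t)) (vecCons f' g') x :=
  hasDerivAt_pi.2 fun i =>
    Fin.cases (by simpa using hf) (fun j => by simpa using hasDerivAt_pi.1 hg j) i

end VectorDerivatives

theorem Real.neg_sqrt_div_two_eq_inv_sqrt_mul (x : ℝ) : -(√x / 2) = (√x)⁻¹ * (-x / 2) := by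
  conv_lhs => rw [← Real.div_sqrt (x := x)]
  ring

section FrameDerivatives

variable (a b s : ℝ)

theorem hasDerivAt_cosh_mul : HasDerivAt (fun t => cosh (a * t)) (a * sinh (a * s)) s := by
  simpa [mul_comm] using ((hasDerivAt_id s).const_mul a).cosh

theorem hasDerivAt_sinh_mul : HasDerivAt (fun t => sinh (a * t)) (a * cosh (a * s)) s := by
  simpa [mul_comm] using ((hasDerivAt_id s).const_mul a).sinh

theorem hasDerivAt_cos_mul : HasDerivAt (fun t => cos (b * t)) (-(b * sin (b * s))) s := by
  simpa [mul_comm] using ((hasDerivAt_id s).const_mul b).cos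

theorem hasDerivAt_sin_mul : HasDerivAt (fun t => sin (b * t)) (b * cos (b * s)) s := by
  simpa [mul_comm] using ((hasDerivAt_id s).const_mul b).sin

def frameL (t : ℝ) : Fin 4 → ℝ :=
  (√(a ^ 2 + b ^ 2))⁻¹ • ![cosh (a * t), sinh (a * t), cos (b * t), -sin (b * t)]

def frameW₁ (t : ℝ) : Fin 4 → ℝ :=
  (√(a ^ 2 + b ^ 2))⁻¹ •
    ![a * sinh (a * t), a * cosh (a * t), -(b * sin (b * t)), -(b * cos (b * t))]

def frameN (t : ℝ) : Fin 4 → ℝ :=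
  -(√(a ^ 2 + b ^ 2) / 2) • ![cosh (a * t), sinh (a * t), -cos (b * t), sin (b * t)]

def frameW₂ (t : ℝ) : Fin 4 → ℝ :=
  (√(a ^ 2 + b ^ 2))⁻¹ • ![b * sinh (a * t), b * cosh (a * t), a * sin (b * t), a * cos (b * t)]

theorem hasDerivAt_frameL : HasDerivAt (frameL a b) (frameW₁ a b s) s := by
  have hv := (hasDerivAt_cosh_mul a s).vecCons <| (hasDerivAt_sinh_mul a s).vecCons <|
    (hasDerivAt_cos_mul b s).vecCons <| (hasDerivAt_sin_mul b s).neg.vecCons <|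
    hasDerivAt_vecEmpty s
  exact hv.const_smul (√(a ^ 2 + b ^ 2))⁻¹

theorem hasDerivAt_frameN :
    HasDerivAt (frameN a b)
      (((b ^ 2 - a ^ 2) / 2) • frameW₁ a b s + (-(a * b)) • frameW₂ a b s) s := by
  have hv := (hasDerivAt_cosh_mul a s).vecCons <| (hasDerivAt_sinh_mul a s).vecCons <|
    (hasDerivAt_cos_mul b s).neg.vecCons <| (hasDerivAt_sin_mul b s).vecCons <|
    hasDerivAt_vecEmpty s
  refine (hv.const_smul (-(√(a ^ 2 + b ^ 2) / 2))).congr_deriv ?_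
  rw [Real.neg_sqrt_div_two_eq_inv_sqrt_mul]
  ext i
  fin_cases i <;>
    simp only [frameW₁, frameW₂, Pi.add_apply, Pi.smul_apply, smul_eq_mul, Fin.reduceFinMk,
      cons_val, cons_val_zero, cons_val_one] <;>
    ring

theorem hasDerivAt_frameW₁ :
    HasDerivAt (frameW₁ a b) (-((b ^ 2 - a ^ 2) / 2) • frameL a b s - frameN a b s) s := by
  have hv := ((hasDerivAt_sinh_mul a s).const_mul a).vecCons <|
    ((hasDerivAt_cosh_mul a s).const_mul a).vecCons <|
    ((hasDerivAt_sin_mul b s).const_mul b).neg.vecCons <|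
    ((hasDerivAt_cos_mul b s).const_mul b).neg.vecCons <| hasDerivAt_vecEmpty s
  refine (hv.const_smul (√(a ^ 2 + b ^ 2))⁻¹).congr_deriv ?_
  rw [frameN, Real.neg_sqrt_div_two_eq_inv_sqrt_mul]
  ext i
  fin_cases i <;>
    simp only [frameL, Pi.sub_apply, Pi.smul_apply, smul_eq_mul, Fin.reduceFinMk,
      cons_val, cons_val_zero, cons_val_one] <;>
    ring

theorem hasDerivAt_frameW₂ : HasDerivAt (frameW₂ a b) (-(-(a * b)) • frameL a b s) s := by
  have hv := ((hasDerivAt_sinh_mul a s).const_mul b).vecCons <|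
    ((hasDerivAt_cosh_mul a s).const_mul b).vecCons <|
    ((hasDerivAt_sin_mul b s).const_mul a).vecCons <|
    ((hasDerivAt_cos_mul b s).const_mul a).vecCons <| hasDerivAt_vecEmpty s
  refine (hv.const_smul (√(a ^ 2 + b ^ 2))⁻¹).congr_deriv ?_
  ext i
  fin_cases i <;>
    simp only [frameL, Pi.smul_apply, smul_eq_mul, Fin.reduceFinMk,
      cons_val, cons_val_zero, cons_val_one] <;>
    ring

end FrameDerivatives

theorem stmt12_general (a b : ℝ)
    (L N W₁ W₂ : ℝ → (Fin 4 → ℝ)) (k₁ k₂ : ℝ)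
    (hL : L = fun s => (Real.sqrt (a ^ 2 + b ^ 2))⁻¹ •
      ![Real.cosh (a * s), Real.sinh (a * s), Real.cos (b * s), -Real.sin (b * s)])
    (hW₁ : W₁ = fun s => (Real.sqrt (a ^ 2 + b ^ 2))⁻¹ •
      ![a * Real.sinh (a * s), a * Real.cosh (a * s),
        -(b * Real.sin (b * s)), -(b * Real.cos (b * s))])
    (hN : N = fun s => -(Real.sqrt (a ^ 2 + b ^ 2) / 2) •
      ![Real.cosh (a * s), Real.sinh (a * s), -Real.cos (b * s), Real.sin (b * s)])
    (hW₂ : W₂ = fun s => (Real.sqrt (a ^ 2 + b ^ 2))⁻¹ •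
      ![b * Real.sinh (a * s), b * Real.cosh (a * s),
        a * Real.sin (b * s), a * Real.cos (b * s)])
    (hk₁ : k₁ = (b ^ 2 - a ^ 2) / 2) (hk₂ : k₂ = -(a * b)) :
    ∀ s, deriv L s = W₁ s ∧
      deriv N s = k₁ • W₁ s + k₂ • W₂ s ∧
      deriv W₁ s = -k₁ • L s - N s ∧
      deriv W₂ s = -k₂ • L s := by
  subst hL hW₁ hN hW₂ hk₁ hk₂
  exact fun s => ⟨(hasDerivAt_frameL a b s).deriv, (hasDerivAt_frameN a b s).deriv,
    (hasDerivAt_frameW₁ a b s).deriv, (hasDerivAt_frameW₂ a b s).deriv⟩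

/-- The given frame for the curve
`c(s) = (a²+b²)^{-1/2} (a⁻¹ sinh as, a⁻¹ cosh as, b⁻¹ sin bs, b⁻¹ cos bs)`
satisfies the Cartan–Frenet equations `L' = W₁`, `N' = k₁W₁ + k₂W₂`,
`W₁' = -k₁L - N`, `W₂' = -k₂L` with `k₁ = (b²-a²)/2` and `k₂ = -ab`. -/
theorem stmt12 (a b : ℝ) (ha : a ≠ 0) (hb : b ≠ 0) (hab : a ≠ b) (hab' : a ≠ -b)
    (c L N W₁ W₂ : ℝ → (Fin 4 → ℝ)) (k₁ k₂ : ℝ)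
    (hc : c = fun s => (Real.sqrt (a ^ 2 + b ^ 2))⁻¹ •
      ![a⁻¹ * Real.sinh (a * s), a⁻¹ * Real.cosh (a * s),
        b⁻¹ * Real.sin (b * s), b⁻¹ * Real.cos (b * s)])
    (hL : L = fun s => (Real.sqrt (a ^ 2 + b ^ 2))⁻¹ •
      ![Real.cosh (a * s), Real.sinh (a * s), Real.cos (b * s), -Real.sin (b * s)])
    (hW₁ : W₁ = fun s => (Real.sqrt (a ^ 2 + b ^ 2))⁻¹ •
      ![a * Real.sinh (a * s), a * Real.cosh (a * s),
        -(b * Real.sin (b * s)), -(b * Real.cos (b * s))])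
    (hN : N = fun s => -(Real.sqrt (a ^ 2 + b ^ 2) / 2) •
      ![Real.cosh (a * s), Real.sinh (a * s), -Real.cos (b * s), Real.sin (b * s)])
    (hW₂ : W₂ = fun s => (Real.sqrt (a ^ 2 + b ^ 2))⁻¹ •
      ![b * Real.sinh (a * s), b * Real.cosh (a * s),
        a * Real.sin (b * s), a * Real.cos (b * s)])
    (hk₁ : k₁ = (b ^ 2 - a ^ 2) / 2) (hk₂ : k₂ = -(a * b)) :
    ∀ s, deriv L s = W₁ s ∧
      deriv N s = k₁ • W₁ s + k₂ • W₂ s ∧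
      deriv W₁ s = -k₁ • L s - N s ∧
      deriv W₂ s = -k₂ • L s :=
  stmt12_general a b L N W₁ W₂ k₁ k₂ hL hW₁ hN hW₂ hk₁ hk₂
end
end

section
/- Let c be a null Cartan curve in Minkowski 4-space with constants α ≠ 0, β satisfying αk₁ + βk₂ = 1, and let c̄(s) = c(s) + αW₁(s) + βW₂(s) with mate frame satisfying (ds̄/ds)L̄ = -αN and N̄ = -(ds̄/ds)α⁻¹L. If ds̄/ds = ℓ₀ is constant, then W̄₁(s̄) = -(αk₁/ℓ₀²)W₁(s) - (αk₂/ℓ₀²)W₂(s), and consequently ℓ₀⁴ = α²(k₁² + k₂²). -/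
/-!
Differentiating `ℓ₀ • L̄(φ s) = -α • N(s)` with the chain rule (`φ' = ℓ₀`) and the Frenet
equations `L̄' = W̄₁`, `N' = k₁W₁ + k₂W₂` gives `ℓ₀² • W̄₁(φ s) = -α • (k₁W₁ + k₂W₂)(s)`.
Taking the Minkowski square of both sides, with `W̄₁` a unit vector and `W₁, W₂` orthonormal,
gives `ℓ₀⁴ = α²(k₁² + k₂²)`.
-/

noncomputable section

lemma mink_smul_self (a : ℝ) (x : Fin 4 → ℝ) : mink (a • x) (a • x) = a ^ 2 * mink x x := by
  simp only [mink, Pi.smul_apply, smul_eq_mul]; ring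

lemma mink_smul_add_smul_self {x y : Fin 4 → ℝ} (hx : mink x x = 1) (hy : mink y y = 1)
    (hxy : mink x y = 0) (a b : ℝ) : mink (a • x + b • y) (a • x + b • y) = a ^ 2 + b ^ 2 := by
  simp only [mink, Pi.add_apply, Pi.smul_apply, smul_eq_mul] at *
  linear_combination a ^ 2 * hx + b ^ 2 * hy + 2 * a * b * hxy

lemma smul_deriv_comp_eq_of_smul_comp_eq {E : Type*} [NormedAddCommGroup E] [NormedSpace ℝ E]
    {f g : ℝ → E} {φ : ℝ → ℝ} {ℓ a : ℝ} (hℓ : ℓ ≠ 0) (hf : Differentiable ℝ f)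
    (hg : Differentiable ℝ g) (hφ : ∀ s, deriv φ s = ℓ) (h : ∀ s, ℓ • f (φ s) = a • g s) (s : ℝ) :
    ℓ ^ 2 • deriv f (φ s) = a • deriv g s := by
  have hφs : HasDerivAt φ ℓ s :=
    hφ s ▸ (differentiableAt_of_deriv_ne_zero ((hφ s).symm ▸ hℓ)).hasDerivAt
  have hleft : HasDerivAt (fun s ↦ ℓ • f (φ s)) (ℓ • ℓ • deriv f (φ s)) s :=
    ((hf (φ s)).hasDerivAt.scomp s hφs).const_smul ℓ
  have hright : HasDerivAt (fun s ↦ a • g s) (a • deriv g s) s :=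
    (hg s).hasDerivAt.const_smul a
  rw [pow_two, mul_smul]
  exact hleft.unique (funext h ▸ hright)

theorem stmt17_general (N W₁ W₂ Lb W₁b : ℝ → (Fin 4 → ℝ)) (k₁ k₂ : ℝ → ℝ)
    (α ℓ₀ : ℝ) (φ : ℝ → ℝ)
    (hℓ₀ : ℓ₀ ≠ 0)
    (hLbd : Differentiable ℝ Lb) (hNd : Differentiable ℝ N)
    -- Cartan–Frenet equations of c:
    (hNfr : ∀ s, deriv N s = k₁ s • W₁ s + k₂ s • W₂ s)
    -- barred Frenet equation L̄' = W̄₁ (derivative in s̄):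
    (hLfrb : ∀ x, deriv Lb x = W₁b x)
    -- pseudo-orthonormality:
    (hW₁W₁ : ∀ s, mink (W₁ s) (W₁ s) = 1) (hW₂W₂ : ∀ s, mink (W₂ s) (W₂ s) = 1)
    (hW₁W₂ : ∀ s, mink (W₁ s) (W₂ s) = 0)
    (hW₁bunit : ∀ x, mink (W₁b x) (W₁b x) = 1)
    -- the mate and frame relations:
    (hφconst : ∀ s, deriv φ s = ℓ₀)
    (hLbrel : ∀ s, ℓ₀ • Lb (φ s) = -α • N s) :
    (∀ s, W₁b (φ s) =
        -(α * k₁ s / ℓ₀ ^ 2) • W₁ s - (α * k₂ s / ℓ₀ ^ 2) • W₂ s) ∧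
      ∀ s, ℓ₀ ^ 4 = α ^ 2 * ((k₁ s) ^ 2 + (k₂ s) ^ 2) := by
  have hW₁b (s : ℝ) : ℓ₀ ^ 2 • W₁b (φ s) = -α • (k₁ s • W₁ s + k₂ s • W₂ s) := by
    rw [← hLfrb, ← hNfr]
    exact smul_deriv_comp_eq_of_smul_comp_eq hℓ₀ hLbd hNd hφconst hLbrel s
  refine ⟨fun s ↦ ?_, fun s ↦ ?_⟩
  · rw [← inv_smul_smul₀ (pow_ne_zero 2 hℓ₀) (W₁b (φ s)), hW₁b]
    simp only [smul_add, smul_smul, sub_eq_add_neg, ← neg_smul]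
    congr 2 <;> field_simp
  · calc ℓ₀ ^ 4 = mink (ℓ₀ ^ 2 • W₁b (φ s)) (ℓ₀ ^ 2 • W₁b (φ s)) := by
          rw [mink_smul_self, hW₁bunit]; ring
      _ = α ^ 2 * (k₁ s ^ 2 + k₂ s ^ 2) := by
          rw [hW₁b, mink_smul_self, mink_smul_add_smul_self (hW₁W₁ s) (hW₂W₂ s) (hW₁W₂ s)]
          ring

/-- With `α ≠ 0`, `β` constants satisfying `αk₁ + βk₂ = 1`, mate
`c̄(s) = c(s) + αW₁(s) + βW₂(s)` and frame relations `(ds̄/ds) L̄ = -αN`,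
`N̄ = -(ds̄/ds) α⁻¹ L`, if `ds̄/ds = ℓ₀` is constant, then
`W̄₁(s̄) = -(αk₁/ℓ₀²) W₁ - (αk₂/ℓ₀²) W₂` and `ℓ₀⁴ = α²(k₁² + k₂²)`. -/
theorem stmt17 (c cb L N W₁ W₂ Lb Nb W₁b : ℝ → (Fin 4 → ℝ)) (k₁ k₂ : ℝ → ℝ)
    (α β ℓ₀ : ℝ) (φ : ℝ → ℝ)
    (hα : α ≠ 0) (hℓ₀ : ℓ₀ ≠ 0)
    (hrel : ∀ s, α * k₁ s + β * k₂ s = 1)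
    (hLbd : Differentiable ℝ Lb) (hNd : Differentiable ℝ N)
    -- Cartan–Frenet equations of c:
    (hcL : ∀ s, deriv c s = L s)
    (hLfr : ∀ s, deriv L s = W₁ s)
    (hNfr : ∀ s, deriv N s = k₁ s • W₁ s + k₂ s • W₂ s)
    (hW₁fr : ∀ s, deriv W₁ s = -(k₁ s) • L s - N s)
    (hW₂fr : ∀ s, deriv W₂ s = -(k₂ s) • L s)
    -- barred Frenet equation L̄' = W̄₁ (derivative in s̄):
    (hLfrb : ∀ x, deriv Lb x = W₁b x)
    -- pseudo-orthonormality: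
    (hLL : ∀ s, mink (L s) (L s) = 0) (hNN : ∀ s, mink (N s) (N s) = 0)
    (hLN : ∀ s, mink (L s) (N s) = 1)
    (hW₁W₁ : ∀ s, mink (W₁ s) (W₁ s) = 1) (hW₂W₂ : ∀ s, mink (W₂ s) (W₂ s) = 1)
    (hW₁W₂ : ∀ s, mink (W₁ s) (W₂ s) = 0)
    (hLW₁ : ∀ s, mink (L s) (W₁ s) = 0) (hLW₂ : ∀ s, mink (L s) (W₂ s) = 0)
    (hNW₁ : ∀ s, mink (N s) (W₁ s) = 0) (hNW₂ : ∀ s, mink (N s) (W₂ s) = 0)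
    (hW₁bunit : ∀ x, mink (W₁b x) (W₁b x) = 1)
    -- the mate and frame relations:
    (hpair : ∀ s, cb (φ s) = c s + α • W₁ s + β • W₂ s)
    (hφconst : ∀ s, deriv φ s = ℓ₀)
    (hLbrel : ∀ s, ℓ₀ • Lb (φ s) = -α • N s)
    (hNbrel : ∀ s, Nb (φ s) = -(ℓ₀ / α) • L s) :
    (∀ s, W₁b (φ s) =
        -(α * k₁ s / ℓ₀ ^ 2) • W₁ s - (α * k₂ s / ℓ₀ ^ 2) • W₂ s) ∧
      ∀ s, ℓ₀ ^ 4 = α ^ 2 * ((k₁ s) ^ 2 + (k₂ s) ^ 2) :=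
  stmt17_general N W₁ W₂ Lb W₁b k₁ k₂ α ℓ₀ φ hℓ₀ hLbd hNd hNfr hLfrb hW₁W₁ hW₂W₂ hW₁W₂ hW₁bunit
    hφconst hLbrel
end
end

section
/- Let a,b be nonzero with a ≠ ±b and b² > a², and let ℓ₀ = √((a²+b²)/(2(b²-a²))). The curve c̄(s̄) = (ℓ₀²/√(a²+b²))·(a⁻¹sinh(as̄/ℓ₀), a⁻¹cosh(as̄/ℓ₀), -b⁻¹sin(bs̄/ℓ₀), -b⁻¹cos(bs̄/ℓ₀)), with s̄ = φ(s) = √((a²+b²)/(2(b²-a²))) s, satisfies c̄(φ(s)) = c(s) + αW₁(s) + βW₂(s), where α = 1/(b²-a²), β = -1/(2ab), c(s) = (a²+b²)^{-1/2}(a⁻¹sinh as, a⁻¹cosh as, b⁻¹sin bs, b⁻¹cos bs), W₁(s) = (a²+b²)^{-1/2}(a sinh as, a cosh as, -b sin bs, -b cos bs), and W₂(s) = (a²+b²)^{-1/2}(b sinh as, b cosh as, a sin bs, a cos bs). -/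
noncomputable section

/-- For `a, b` nonzero with `a ≠ ±b` and `b² > a²`, the curve
`c̄(s̄) = (ℓ₀²/√(a²+b²)) (a⁻¹ sinh(as̄/ℓ₀), a⁻¹ cosh(as̄/ℓ₀), -b⁻¹ sin(bs̄/ℓ₀),
-b⁻¹ cos(bs̄/ℓ₀))` with `s̄ = φ(s) = √((a²+b²)/(2(b²-a²))) s` satisfies
`c̄(φ(s)) = c(s) + α W₁(s) + β W₂(s)` where `α = 1/(b²-a²)`, `β = -1/(2ab)`. -/
theorem stmt19 (a b : ℝ) (ha : a ≠ 0) (hb : b ≠ 0) (hab : a ≠ b) (hab' : a ≠ -b)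
    (hba : b ^ 2 > a ^ 2)
    (α β ℓ₀ : ℝ) (φ : ℝ → ℝ) (c cb W₁ W₂ : ℝ → (Fin 4 → ℝ))
    (hα : α = 1 / (b ^ 2 - a ^ 2)) (hβ : β = -(1 / (2 * a * b)))
    (hℓ₀ : ℓ₀ = Real.sqrt ((a ^ 2 + b ^ 2) / (2 * (b ^ 2 - a ^ 2))))
    (hφ : φ = fun s => ℓ₀ * s)
    (hc : c = fun s => (Real.sqrt (a ^ 2 + b ^ 2))⁻¹ •
      ![a⁻¹ * Real.sinh (a * s), a⁻¹ * Real.cosh (a * s),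
        b⁻¹ * Real.sin (b * s), b⁻¹ * Real.cos (b * s)])
    (hW₁ : W₁ = fun s => (Real.sqrt (a ^ 2 + b ^ 2))⁻¹ •
      ![a * Real.sinh (a * s), a * Real.cosh (a * s),
        -(b * Real.sin (b * s)), -(b * Real.cos (b * s))])
    (hW₂ : W₂ = fun s => (Real.sqrt (a ^ 2 + b ^ 2))⁻¹ •
      ![b * Real.sinh (a * s), b * Real.cosh (a * s),
        a * Real.sin (b * s), a * Real.cos (b * s)])
    (hcb : cb = fun sb => (ℓ₀ ^ 2 / Real.sqrt (a ^ 2 + b ^ 2)) •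
      ![a⁻¹ * Real.sinh (a * sb / ℓ₀), a⁻¹ * Real.cosh (a * sb / ℓ₀),
        -(b⁻¹ * Real.sin (b * sb / ℓ₀)), -(b⁻¹ * Real.cos (b * sb / ℓ₀))]) :
    ∀ s, cb (φ s) = c s + α • W₁ s + β • W₂ s := by
  intro s
  have hba' : (0:ℝ) < b ^ 2 - a ^ 2 := by linarith
  have hS : (0:ℝ) < a ^ 2 + b ^ 2 := by positivity
  have hℓpos : (0:ℝ) < ℓ₀ := by
    rw [hℓ₀]; exact Real.sqrt_pos.mpr (by positivity)
  have hℓ0 : ℓ₀ ≠ 0 := ne_of_gt hℓpos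
  have hℓ2 : ℓ₀ ^ 2 = (a ^ 2 + b ^ 2) / (2 * (b ^ 2 - a ^ 2)) := by
    rw [hℓ₀, Real.sq_sqrt (by positivity)]
  have hsq : Real.sqrt (a ^ 2 + b ^ 2) ≠ 0 := by positivity
  have harg : ∀ x : ℝ, x * (ℓ₀ * s) / ℓ₀ = x * s := by
    intro x; field_simp
  subst hφ hc hcb hW₁ hW₂ hα hβ
  funext i
  fin_cases i <;>
    simp only [Pi.add_apply, Pi.smul_apply, smul_eq_mul,
      Matrix.cons_val_zero, Matrix.cons_val_one, Matrix.head_cons,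
      Matrix.cons_val_two, Matrix.tail_cons, Matrix.cons_val_three, harg,
        Fin.reduceFinMk, Matrix.cons_val] <;>
    rw [hℓ2] <;> field_simp <;> ring
end
end
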